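/- (Proposition 2: the region formed by finitely many zeroth-order cuts is a relaxation of the original feasible region.) Let d : ℕ, L ≥ 0, μ > 0 and ε ≥ 0, and let φ : EuclideanSpace ℝ (Fin d) → ℝ have L-Lipschitz gradient. Let w₁, …, w_m be finitely many cut-generation points and, for each l, set g_l := ∫ ∇φ(w_l + μ • u) ∂γ_d(u). Then {w | φ(w) = 0} ⊆ ⋂_{l=1}^{m} {w | φ(w_l) + ⟪g_l, w − w_l⟫ − ((L+1)/2)·‖w − w_l‖² − (μ²/8)·L²·(d+3)³ ≤ ε}. In particular, the feasible region formed by the zeroth-order cuts always contains the original feasible region {w | φ(w) = 0}, and it can only shrink (is monotonically tightened) as additional cuts are added. -/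

import Mathlib

/-! The descent lemma for a function with `L`-Lipschitz gradient gives
`φ w + ⟪∇φ w, x - w⟫ - L/2 ‖x - w‖² ≤ φ x`, and Young's inequality trades the gradient error
`⟪g - ∇φ w, x - w⟫` for `‖x - w‖²/2 + ‖g - ∇φ w‖²/2`. The Gaussian-smoothed gradient satisfies
`‖g - ∇φ w‖ ≤ L |μ| 𝔼‖u‖ ≤ L |μ| (d + 1)/2`, since `‖u‖ ≤ (1 + ‖u‖²)/2` and `𝔼‖u‖² = d`.
As `(d + 1)² ≤ (d + 3)³`, every cut is at most `φ x`, which vanishes on the feasible region. -/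

open MeasureTheory RealInnerProductSpace

/-- The standard Gaussian measure on `EuclideanSpace ℝ (Fin d)`, i.e. the product of `d`
copies of the real standard Gaussian measure. -/
noncomputable def stdGaussian (d : ℕ) : Measure (EuclideanSpace ℝ (Fin d)) :=
  (Measure.pi (fun _ : Fin d => ProbabilityTheory.gaussianReal 0 1)).map (WithLp.toLp 2)

open ProbabilityTheory (gaussianReal IsGaussian integral_id_gaussianReal variance_id_gaussianReal
  variance_of_integral_eq_zero)

section LipschitzGradient

variable {E : Type*} [NormedAddCommGroup E] [InnerProductSpace ℝ E] [CompleteSpace E]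
  {φ : E → ℝ} {K : NNReal}

theorem add_inner_gradient_sub_sq_le (hφ : Differentiable ℝ φ)
    (hK : LipschitzWith K (gradient φ)) (a b : E) :
    φ a + ⟪gradient φ a, b - a⟫ - K / 2 * ‖b - a‖ ^ 2 ≤ φ b := by
  set v := b - a
  set k : ℝ → ℝ := fun t => φ (a + t • v) - t * ⟪gradient φ a, v⟫ + K / 2 * t ^ 2 * ‖v‖ ^ 2
  have hk : ∀ t : ℝ,
      HasDerivAt k (⟪gradient φ (a + t • v) - gradient φ a, v⟫ + K * t * ‖v‖ ^ 2) t := by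
    intro t
    have hline : HasDerivAt (fun t : ℝ => a + t • v) v t := by
      simpa using ((hasDerivAt_id t).smul_const v).const_add a
    have hφt := ((hφ _).hasGradientAt.hasFDerivAt).comp_hasDerivAt t hline
    rw [InnerProductSpace.toDual_apply_apply] at hφt
    refine ((hφt.sub ((hasDerivAt_id t).mul_const ⟪gradient φ a, v⟫)).add
      (((hasDerivAt_pow 2 t).const_mul (K / 2 : ℝ)).mul_const (‖v‖ ^ 2))).congr_deriv ?_
    rw [inner_sub_left]
    ring
  have hk_nonneg : ∀ t : ℝ, 0 ≤ t →
      0 ≤ ⟪gradient φ (a + t • v) - gradient φ a, v⟫ + K * t * ‖v‖ ^ 2 := by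
    intro t ht
    have hlip : ‖gradient φ (a + t • v) - gradient φ a‖ ≤ K * (t * ‖v‖) := by
      simpa [norm_smul, abs_of_nonneg ht] using hK.norm_sub_le (a + t • v) a
    have hcs := (abs_le.mp (abs_real_inner_le_norm (gradient φ (a + t • v) - gradient φ a) v)).1
    nlinarith [norm_nonneg v]
  have hmono : MonotoneOn k (Set.Ici 0) :=
    monotoneOn_of_hasDerivWithinAt_nonneg (convex_Ici 0)
      (fun t _ => (hk t).continuousAt.continuousWithinAt)
      (fun t _ => (hk t).hasDerivWithinAt)
      (fun t ht => hk_nonneg t (le_of_lt (by simpa using ht)))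
  have hk01 := hmono Set.self_mem_Ici (Set.mem_Ici.mpr zero_le_one) zero_le_one
  simp only [k, zero_smul, add_zero, one_smul, v, add_sub_cancel] at hk01
  linarith

theorem add_inner_sub_sq_le_of_inexact_gradient (hφ : Differentiable ℝ φ)
    (hK : LipschitzWith K (gradient φ)) (a b g : E) :
    φ a + ⟪g, b - a⟫ - (K + 1) / 2 * ‖b - a‖ ^ 2 ≤ φ b + ‖g - gradient φ a‖ ^ 2 / 2 := by
  have hdescent := add_inner_gradient_sub_sq_le hφ hK a b
  have hsplit : ⟪g, b - a⟫ = ⟪gradient φ a, b - a⟫ + ⟪g - gradient φ a, b - a⟫ := by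
    rw [inner_sub_left]; ring
  have hexpand := norm_sub_sq_real (g - gradient φ a) (b - a)
  nlinarith [sq_nonneg ‖g - gradient φ a - (b - a)‖]

end LipschitzGradient

theorem norm_integral_comp_add_smul_sub_le {E F : Type*} [NormedAddCommGroup E]
    [NormedSpace ℝ E] [MeasurableSpace E] [OpensMeasurableSpace E] [SecondCountableTopology E]
    [NormedAddCommGroup F] [NormedSpace ℝ F] [CompleteSpace F]
    {ν : Measure E} [IsProbabilityMeasure ν] (hν : Integrable (fun u => ‖u‖) ν)
    {f : E → F} {K : NNReal} (hf : LipschitzWith K f) (a : E) (μ : ℝ) :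
    ‖∫ u, f (a + μ • u) ∂ν - f a‖ ≤ K * (‖μ‖ * ∫ u, ‖u‖ ∂ν) := by
  have hpt : ∀ u, ‖f (a + μ • u) - f a‖ ≤ K * ‖μ‖ * ‖u‖ := fun u => by
    simpa [norm_smul, mul_assoc] using hf.norm_sub_le (a + μ • u) a
  have hint : Integrable (fun u => f (a + μ • u) - f a) ν :=
    (hν.const_mul (K * ‖μ‖)).mono'
      ((hf.continuous.comp (by fun_prop)).sub continuous_const).aestronglyMeasurable
      (Filter.Eventually.of_forall hpt)
  have hsub : ∫ u, f (a + μ • u) ∂ν - f a = ∫ u, (f (a + μ • u) - f a) ∂ν := by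
    have hint' : Integrable (fun u => f (a + μ • u)) ν := by
      refine (hint.add (integrable_const (f a))).congr (ae_of_all _ fun u => ?_)
      simp
    rw [integral_sub hint' (integrable_const _), integral_const, probReal_univ, one_smul]
  calc ‖∫ u, f (a + μ • u) ∂ν - f a‖
      ≤ ∫ u, ‖f (a + μ • u) - f a‖ ∂ν := hsub ▸ norm_integral_le_integral_norm _
    _ ≤ ∫ u, K * ‖μ‖ * ‖u‖ ∂ν := integral_mono hint.norm (hν.const_mul _) hpt
    _ = K * (‖μ‖ * ∫ u, ‖u‖ ∂ν) := by rw [integral_const_mul, mul_assoc]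

lemma integral_sq_gaussianReal : ∫ x, x ^ 2 ∂gaussianReal 0 1 = 1 := by
  change ∫ x, id x ^ 2 ∂_ = 1
  rw [← variance_of_integral_eq_zero aemeasurable_id integral_id_gaussianReal]
  exact variance_id_gaussianReal

instance isGaussian_stdGaussian (d : ℕ) : IsGaussian (stdGaussian d) := by
  rw [stdGaussian, ProbabilityTheory.map_pi_eq_stdGaussian]
  infer_instance

lemma integral_norm_sq_stdGaussian (d : ℕ) : ∫ u, ‖u‖ ^ 2 ∂stdGaussian d = d := by
  have hsq : Integrable (fun x : ℝ => x ^ 2) (gaussianReal 0 1) :=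
    IsGaussian.memLp_two_id.integrable_sq
  rw [stdGaussian, integral_map (by fun_prop) (by fun_prop)]
  simp_rw [EuclideanSpace.real_norm_sq_eq]
  rw [integral_finsetSum _ fun i _ => integrable_comp_eval (i := i) hsq]
  simp [integral_comp_eval (μ := fun _ => gaussianReal 0 1) hsq.aestronglyMeasurable,
    integral_sq_gaussianReal]

lemma integral_norm_stdGaussian_le (d : ℕ) : ∫ u, ‖u‖ ∂stdGaussian d ≤ (d + 1) / 2 := by
  have hsq : Integrable (fun u => ‖u‖ ^ 2) (stdGaussian d) :=
    IsGaussian.memLp_two_id.integrable_norm_pow two_ne_zero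
  calc ∫ u, ‖u‖ ∂stdGaussian d ≤ ∫ u, (1 + ‖u‖ ^ 2) / 2 ∂stdGaussian d :=
        integral_mono IsGaussian.integrable_id.norm (((integrable_const 1).add hsq).div_const 2)
          fun u => by nlinarith [sq_nonneg (‖u‖ - 1)]
    _ = (d + 1) / 2 := by
        rw [integral_div, integral_add (integrable_const 1) hsq, integral_norm_sq_stdGaussian]
        simp [add_comm]

theorem zeroth_order_cuts_relaxation_general
    (d m : ℕ) (L μ ε : ℝ) (hL : 0 ≤ L) (hε : 0 ≤ ε)
    (φ : EuclideanSpace ℝ (Fin d) → ℝ)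
    (hdiff : Differentiable ℝ φ)
    (hlip : ∀ x y, ‖gradient φ x - gradient φ y‖ ≤ L * ‖x - y‖)
    (w : Fin m → EuclideanSpace ℝ (Fin d))
    (g : Fin m → EuclideanSpace ℝ (Fin d))
    (hg : ∀ l : Fin m, g l = ∫ u, gradient φ (w l + μ • u) ∂(stdGaussian d)) :
    {x : EuclideanSpace ℝ (Fin d) | φ x = 0} ⊆
      ⋂ l : Fin m, {x : EuclideanSpace ℝ (Fin d) |
        φ (w l) + ⟪g l, x - w l⟫ - (L + 1) / 2 * ‖x - w l‖ ^ 2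
          - μ ^ 2 / 8 * L ^ 2 * ((d : ℝ) + 3) ^ 3 ≤ ε} := by
  have hK : LipschitzWith L.toNNReal (gradient φ) :=
    LipschitzWith.of_dist_le' fun x y => by simpa only [dist_eq_norm] using hlip x y
  intro x (hx : φ x = 0)
  refine Set.mem_iInter.mpr fun l => show _ ≤ ε from ?_
  have hcut := add_inner_sub_sq_le_of_inexact_gradient hdiff hK (w l) x (g l)
  rw [Real.coe_toNNReal L hL, hx] at hcut
  have hsmooth : ‖g l - gradient φ (w l)‖ ≤ L * (|μ| * ((d + 1) / 2)) := by
    rw [hg l, ← Real.coe_toNNReal L hL, ← Real.norm_eq_abs]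
    refine (norm_integral_comp_add_smul_sub_le IsGaussian.integrable_id.norm hK (w l) μ).trans ?_
    gcongr
    exact integral_norm_stdGaussian_le d
  have hsmooth_sq : ‖g l - gradient φ (w l)‖ ^ 2 / 2 ≤ μ ^ 2 / 8 * L ^ 2 * ((d : ℝ) + 1) ^ 2 := by
    have := pow_le_pow_left₀ (norm_nonneg _) hsmooth 2
    rw [mul_pow, mul_pow, sq_abs, div_pow] at this
    linarith
  have hdim : ((d : ℝ) + 1) ^ 2 ≤ ((d : ℝ) + 3) ^ 3 := by nlinarith [d.cast_nonneg (α := ℝ)]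
  have := mul_le_mul_of_nonneg_left hdim (by positivity : 0 ≤ μ ^ 2 / 8 * L ^ 2)
  linarith

/-- **Proposition 2 (the region formed by finitely many zeroth-order cuts is a relaxation
of the original feasible region).**  For cut-generation points `w 1, …, w m` with
Gaussian-smoothed gradients `g l`, the original feasible region `{x | φ x = 0}` is contained
in the intersection of the half-sets cut out by the zeroth-order cuts. -/
theorem zeroth_order_cuts_relaxation
    (d m : ℕ) (L μ ε : ℝ) (hL : 0 ≤ L) (hμ : 0 < μ) (hε : 0 ≤ ε)
    (φ : EuclideanSpace ℝ (Fin d) → ℝ)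
    (hdiff : Differentiable ℝ φ)
    (hlip : ∀ x y, ‖gradient φ x - gradient φ y‖ ≤ L * ‖x - y‖)
    (w : Fin m → EuclideanSpace ℝ (Fin d))
    (g : Fin m → EuclideanSpace ℝ (Fin d))
    (hg : ∀ l : Fin m, g l = ∫ u, gradient φ (w l + μ • u) ∂(stdGaussian d)) :
    {x : EuclideanSpace ℝ (Fin d) | φ x = 0} ⊆
      ⋂ l : Fin m, {x : EuclideanSpace ℝ (Fin d) |
        φ (w l) + ⟪g l, x - w l⟫ - (L + 1) / 2 * ‖x - w l‖ ^ 2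
          - μ ^ 2 / 8 * L ^ 2 * ((d : ℝ) + 3) ^ 3 ≤ ε} :=
  zeroth_order_cuts_relaxation_general d m L μ ε hL hε φ hdiff hlip w g hg
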